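/- Let p > 1 and θ ∈ (0,1]. Then there exists a constant C > 0 such that for all a, b ∈ ℝⁿ one has | |a+b|^p − |a|^p − |b|^p | ≤ C ( |a|^{p−θ} |b|^θ + |a|^θ |b|^{p−θ} ). -/

import Mathlib

/-!
Assume `‖b‖ ≤ ‖a‖`. Since `‖a + b‖` and `‖a‖` both lie in `[0, 2‖a‖]` and differ by at most
`‖b‖`, the mean value theorem for `t ↦ t ^ p` gives
`|‖a + b‖ ^ p - ‖a‖ ^ p| ≤ p (2‖a‖) ^ (p - 1) ‖b‖`. Because `‖b‖ / ‖a‖ ≤ 1`, the monomials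
`‖a‖ ^ (p - s) ‖b‖ ^ s` decrease in `s`, so both this term (`s = 1`) and `‖b‖ ^ p` (`s = p`)
are bounded by `‖a‖ ^ (p - θ) ‖b‖ ^ θ` for every `θ ≤ 1`. The other case is symmetric.
-/

open Real

lemma abs_rpow_sub_rpow_le {p M x y : ℝ} (hp : 1 ≤ p) (hx : x ∈ Set.Icc 0 M)
    (hy : y ∈ Set.Icc 0 M) : |x ^ p - y ^ p| ≤ p * M ^ (p - 1) * |x - y| := by
  have hderiv : ∀ z ∈ Set.Icc 0 M,
      HasDerivWithinAt (fun z : ℝ => z ^ p) (p * z ^ (p - 1)) (Set.Icc 0 M) z :=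
    fun z _ => (hasDerivAt_rpow_const (Or.inr hp)).hasDerivWithinAt
  have hbound : ∀ z ∈ Set.Icc 0 M, ‖p * z ^ (p - 1)‖ ≤ p * M ^ (p - 1) := by
    rintro z ⟨hz, hzM⟩
    have : 0 ≤ p := by linarith
    rw [norm_of_nonneg (by positivity)]
    gcongr
  simpa only [norm_eq_abs] using
    (convex_Icc 0 M).norm_image_sub_le_of_norm_hasDerivWithin_le hderiv hbound hy hx

lemma rpow_sub_mul_rpow_le_of_le {A B p s θ : ℝ} (hB : 0 < B) (hBA : B ≤ A) (hθs : θ ≤ s) :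
    A ^ (p - s) * B ^ s ≤ A ^ (p - θ) * B ^ θ := by
  have hA : 0 < A := hB.trans_le hBA
  calc A ^ (p - s) * B ^ s = A ^ (p - s) * B ^ (s - θ) * B ^ θ := by
        rw [mul_assoc, ← rpow_add hB, sub_add_cancel]
    _ ≤ A ^ (p - s) * A ^ (s - θ) * B ^ θ := by gcongr
    _ = A ^ (p - θ) * B ^ θ := by rw [← rpow_add hA, sub_add_sub_cancel]

section

variable {E : Type*} [NormedAddCommGroup E] {p θ : ℝ}

lemma abs_norm_add_rpow_sub_le_of_norm_le (hp : 1 ≤ p) (hθ : θ ≤ 1) {a b : E}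
    (hba : ‖b‖ ≤ ‖a‖) :
    |‖a + b‖ ^ p - ‖a‖ ^ p - ‖b‖ ^ p| ≤ (p * 2 ^ (p - 1) + 1) * (‖a‖ ^ (p - θ) * ‖b‖ ^ θ) := by
  have hp0 : 0 ≤ p := by linarith
  have hC : 0 ≤ p * 2 ^ (p - 1) := mul_nonneg hp0 (by positivity)
  rcases (norm_nonneg b).eq_or_lt with hb | hb
  · rw [norm_eq_zero.mp hb.symm]
    simp only [add_zero, sub_self, norm_zero, zero_rpow (by linarith : p ≠ 0), abs_zero]
    positivity
  have hmem : ∀ {x : ℝ}, 0 ≤ x → x ≤ ‖a‖ + ‖b‖ → x ∈ Set.Icc 0 (2 * ‖a‖) :=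
    fun h0 h => ⟨h0, by linarith⟩
  have hmvt : |‖a + b‖ ^ p - ‖a‖ ^ p| ≤ p * 2 ^ (p - 1) * (‖a‖ ^ (p - 1) * ‖b‖) := calc
    _ ≤ p * (2 * ‖a‖) ^ (p - 1) * |‖a + b‖ - ‖a‖| :=
      abs_rpow_sub_rpow_le hp (hmem (norm_nonneg _) (norm_add_le a b))
        (hmem (norm_nonneg _) (by linarith [norm_nonneg b]))
    _ ≤ p * (2 * ‖a‖) ^ (p - 1) * ‖b‖ := by
      gcongr
      simpa using abs_norm_sub_norm_le (a + b) a
    _ = p * 2 ^ (p - 1) * (‖a‖ ^ (p - 1) * ‖b‖) := by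
      rw [mul_rpow zero_le_two (norm_nonneg a)]
      ring
  calc |‖a + b‖ ^ p - ‖a‖ ^ p - ‖b‖ ^ p| ≤ |‖a + b‖ ^ p - ‖a‖ ^ p| + |‖b‖ ^ p| := abs_sub _ _
    _ ≤ p * 2 ^ (p - 1) * (‖a‖ ^ (p - 1) * ‖b‖ ^ (1 : ℝ)) + ‖a‖ ^ (p - p) * ‖b‖ ^ p := by
      rw [abs_of_nonneg (rpow_nonneg (norm_nonneg b) p), sub_self, rpow_zero, one_mul, rpow_one]
      exact add_le_add_left hmvt _
    _ ≤ p * 2 ^ (p - 1) * (‖a‖ ^ (p - θ) * ‖b‖ ^ θ) + ‖a‖ ^ (p - θ) * ‖b‖ ^ θ :=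
      add_le_add (mul_le_mul_of_nonneg_left (rpow_sub_mul_rpow_le_of_le hb hba hθ) hC)
        (rpow_sub_mul_rpow_le_of_le hb hba (by linarith))
    _ = (p * 2 ^ (p - 1) + 1) * (‖a‖ ^ (p - θ) * ‖b‖ ^ θ) := by ring

lemma abs_norm_add_rpow_sub_le (hp : 1 ≤ p) (hθ : θ ≤ 1) (a b : E) :
    |‖a + b‖ ^ p - ‖a‖ ^ p - ‖b‖ ^ p| ≤
      (p * 2 ^ (p - 1) + 1) * (‖a‖ ^ (p - θ) * ‖b‖ ^ θ + ‖a‖ ^ θ * ‖b‖ ^ (p - θ)) := by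
  rw [mul_add]
  rcases le_total ‖b‖ ‖a‖ with hba | hab
  · exact le_add_of_le_of_nonneg (abs_norm_add_rpow_sub_le_of_norm_le hp hθ hba) (by positivity)
  · have h := abs_norm_add_rpow_sub_le_of_norm_le hp hθ hab
    rw [add_comm b a, sub_right_comm, mul_comm (‖b‖ ^ (p - θ))] at h
    exact le_add_of_nonneg_of_le (by positivity) h

end

theorem elementary_inequality_general (n : ℕ) (p θ : ℝ) (hp : 1 < p) (hθ1 : θ ≤ 1) :
    ∃ C : ℝ, 0 < C ∧ ∀ a b : EuclideanSpace ℝ (Fin n),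
      |‖a + b‖ ^ p - ‖a‖ ^ p - ‖b‖ ^ p| ≤
        C * (‖a‖ ^ (p - θ) * ‖b‖ ^ θ + ‖a‖ ^ θ * ‖b‖ ^ (p - θ)) :=
  ⟨p * 2 ^ (p - 1) + 1,
    add_pos_of_nonneg_of_pos (mul_nonneg (by linarith) (by positivity)) one_pos,
    abs_norm_add_rpow_sub_le hp.le hθ1⟩

/-- Let `p > 1` and `θ ∈ (0,1]`. Then there exists `C > 0` such that
for all `a b ∈ ℝⁿ` (Euclidean norm),
`| ‖a+b‖^p − ‖a‖^p − ‖b‖^p | ≤ C (‖a‖^{p−θ} ‖b‖^θ + ‖a‖^θ ‖b‖^{p−θ})`. -/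
theorem elementary_inequality (n : ℕ) (p θ : ℝ) (hp : 1 < p) (hθ0 : 0 < θ) (hθ1 : θ ≤ 1) :
    ∃ C : ℝ, 0 < C ∧ ∀ a b : EuclideanSpace ℝ (Fin n),
      |‖a + b‖ ^ p - ‖a‖ ^ p - ‖b‖ ^ p| ≤
        C * (‖a‖ ^ (p - θ) * ‖b‖ ^ θ + ‖a‖ ^ θ * ‖b‖ ^ (p - θ)) :=
  elementary_inequality_general n p θ hp hθ1
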